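/- arXiv:1210.1518 — 3 statements merged into one kernel-verified Lean document; each statement's English description precedes it below -/
import Mathlib

section
/- Let H be the group with presentation ⟨a, b, c ∣ a² = b² = c² = (abc)² = 1⟩. Then H is infinite. -/
/-!
Sending `a, c ↦ s`, `b ↦ s r` defines a homomorphism onto the infinite dihedral group
`D∞ = ⟨r, s ∣ s² = (s r)² = 1⟩`: all three images are reflections, and so is the image `s · s r · s`
of `abc`. The image of `ab` is the translation `r`, which has infinite order, so `H` is infinite.
-/

/-- The relations of `H = ⟨a, b, c ∣ a² = b² = c² = (abc)² = 1⟩`. -/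
def hexRels : Set (FreeGroup (Fin 3)) :=
  { (FreeGroup.of 0) ^ 2, (FreeGroup.of 1) ^ 2, (FreeGroup.of 2) ^ 2,
    (FreeGroup.of 0 * FreeGroup.of 1 * FreeGroup.of 2) ^ 2 }

lemma infinite_of_orderOf_map_eq_zero {G K : Type*} [Group G] [Monoid K] (f : G →* K) {x : G}
    (hx : orderOf (f x) = 0) : Infinite G := by
  by_contra hG
  have : Finite G := not_infinite_iff_finite.mp hG
  exact (Nat.pos_of_dvd_of_pos (orderOf_map_dvd f x) (orderOf_pos x)).ne' hx

open DihedralGroup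

def hexReflections : Fin 3 → DihedralGroup 0 := ![sr 0, sr 1, sr 0]

lemma lift_hexReflections_eq_one : ∀ r ∈ hexRels, FreeGroup.lift hexReflections r = 1 := by
  rintro r (rfl | rfl | rfl | rfl) <;>
    simp [hexReflections, sq, sr_mul_sr, r_mul_sr, one_def, -r_zero]

def toInfiniteDihedral : PresentedGroup hexRels →* DihedralGroup 0 :=
  PresentedGroup.toGroup lift_hexReflections_eq_one

lemma toInfiniteDihedral_of_mul_of :
    toInfiniteDihedral (PresentedGroup.of 0 * PresentedGroup.of 1) = r 1 := by
  simp [toInfiniteDihedral, hexReflections, sr_mul_sr]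

/-- The group `H = ⟨a, b, c ∣ a² = b² = c² = (abc)² = 1⟩` is infinite. -/
theorem stmt_6 : Infinite (PresentedGroup hexRels) :=
  infinite_of_orderOf_map_eq_zero toInfiniteDihedral
    (by rw [toInfiniteDihedral_of_mul_of, orderOf_r_one])
end

section
/- Let G be the group with presentation on six generators a₁,…,a₆ with relations aᵢ² = 1 for all i, aᵢaⱼ = aⱼaᵢ whenever i and j have opposite parity, and (a₁a₃a₅)² = (a₂a₄a₆)² = 1. Then G is isomorphic to H × H, where H = ⟨a, b, c ∣ a² = b² = c² = (abc)² = 1⟩. -/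
/-- The relations of the group `G` on six generators `a₁,…,a₆` (indexed by
`0,…,5`): each generator is an involution, generators of opposite parity
commute, and `(a₁a₃a₅)² = (a₂a₄a₆)² = 1`. -/
def gRels : Set (FreeGroup (Fin 6)) :=
  { w | (∃ i : Fin 6, w = (FreeGroup.of i) ^ 2) ∨
        (∃ i j : Fin 6, i.val % 2 ≠ j.val % 2 ∧
          w = FreeGroup.of i * FreeGroup.of j * (FreeGroup.of i)⁻¹ * (FreeGroup.of j)⁻¹) ∨
        w = (FreeGroup.of 0 * FreeGroup.of 2 * FreeGroup.of 4) ^ 2 ∨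
        w = (FreeGroup.of 1 * FreeGroup.of 3 * FreeGroup.of 5) ^ 2 }

/-!
The generators of `G` split by parity into two copies `a₁, a₃, a₅` and `a₂, a₄, a₆` of the
generators `x₀, x₁, x₂` of `H`, and the relations of `G` are those of `H` on each copy together
with the commutation of the two copies: the standard presentation of a direct product.
So `a₂ₖ₊₁ ↦ (xₖ, 1)`, `a₂ₖ₊₂ ↦ (1, xₖ)` defines `G → H × H`, the two copies of `H` in `G`
commute and so define `H × H → G`, and both composites fix generators.
-/

namespace PresentedGroup

variable {α β M : Type*} [Group M] {R : Set (FreeGroup α)} {S : Set (FreeGroup β)}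

@[simp]
theorem mk_of (i : α) : mk R (FreeGroup.of i) = of i := rfl

theorem commute_of_forall_commute_of {f : PresentedGroup R →* M} {g : PresentedGroup S →* M}
    (h : ∀ i j, Commute (f (of i)) (g (of j))) (x : PresentedGroup R) (y : PresentedGroup S) :
    Commute (f x) (g y) := by
  have of_left (i : α) : Commute (f (of i)) (g y) :=
    generated_by S ((Subgroup.centralizer {f (of i)}).comap g)
      (fun j => Subgroup.mem_centralizer_singleton_iff.mpr (h i j).symm.eq) y
      |> Subgroup.mem_centralizer_singleton_iff.mp |>.symm
  exact generated_by R ((Subgroup.centralizer {g y}).comap f)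
    (fun i => Subgroup.mem_centralizer_singleton_iff.mpr (of_left i).eq) x
    |> Subgroup.mem_centralizer_singleton_iff.mp

end PresentedGroup

open PresentedGroup

section Hex

variable {M : Type*} [Group M]

theorem hex_of_sq (i : Fin 3) : (of i : PresentedGroup hexRels) ^ 2 = 1 := by
  have hrel : FreeGroup.of i ^ 2 ∈ hexRels := by fin_cases i <;> simp [hexRels]
  simpa using one_of_mem hrel

theorem hex_of_mul_of_mul_of_sq :
    ((of 0 : PresentedGroup hexRels) * of 1 * of 2) ^ 2 = 1 := by
  have hrel : (FreeGroup.of 0 * FreeGroup.of 1 * FreeGroup.of 2 : FreeGroup (Fin 3)) ^ 2 ∈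
      hexRels := by simp [hexRels]
  simpa using one_of_mem hrel

def hexLift (x y z : M) (hx : x ^ 2 = 1) (hy : y ^ 2 = 1) (hz : z ^ 2 = 1)
    (hxyz : (x * y * z) ^ 2 = 1) : PresentedGroup hexRels →* M :=
  toGroup (f := ![x, y, z]) <| by
    rintro r (rfl | rfl | rfl | rfl) <;> simpa

@[simp]
theorem hexLift_of {x y z : M} (hx : x ^ 2 = 1) (hy : y ^ 2 = 1) (hz : z ^ 2 = 1)
    (hxyz : (x * y * z) ^ 2 = 1) (i : Fin 3) :
    hexLift x y z hx hy hz hxyz (of i) = ![x, y, z] i :=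
  toGroup.of _

end Hex

section SixGenerators

variable {M : Type*} [Group M]

theorem g_of_sq (i : Fin 6) : (of i : PresentedGroup gRels) ^ 2 = 1 := by
  simpa using one_of_mem (rels := gRels) (Or.inl ⟨i, rfl⟩)

theorem g_commute_of {i j : Fin 6} (hij : i.val % 2 ≠ j.val % 2) :
    Commute (of i : PresentedGroup gRels) (of j) := by
  have hrel := one_of_mem (rels := gRels) (Or.inr (Or.inl ⟨i, j, hij, rfl⟩))
  rw [map_mul, map_mul, map_inv, map_inv, mk_of, mk_of] at hrel
  exact commutatorElement_eq_one_iff_commute.mp hrel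

theorem g_of_mul_of_mul_of_sq_even :
    ((of 0 : PresentedGroup gRels) * of 2 * of 4) ^ 2 = 1 := by
  simpa using one_of_mem (rels := gRels) (Or.inr (Or.inr (Or.inl rfl)))

theorem g_of_mul_of_mul_of_sq_odd :
    ((of 1 : PresentedGroup gRels) * of 3 * of 5) ^ 2 = 1 := by
  simpa using one_of_mem (rels := gRels) (Or.inr (Or.inr (Or.inr rfl)))

def gLift (a : Fin 6 → M) (hsq : ∀ i, a i ^ 2 = 1)
    (hcomm : ∀ i j : Fin 6, i.val % 2 ≠ j.val % 2 → Commute (a i) (a j))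
    (heven : (a 0 * a 2 * a 4) ^ 2 = 1) (hodd : (a 1 * a 3 * a 5) ^ 2 = 1) :
    PresentedGroup gRels →* M :=
  toGroup (f := a) <| by
    rintro r (⟨i, rfl⟩ | ⟨i, j, hij, rfl⟩ | rfl | rfl)
    · simpa using hsq i
    · simp [(hcomm i j hij).eq]
    · simpa using heven
    · simpa using hodd

@[simp]
theorem gLift_of {a : Fin 6 → M} (hsq : ∀ i, a i ^ 2 = 1)
    (hcomm : ∀ i j : Fin 6, i.val % 2 ≠ j.val % 2 → Commute (a i) (a j))
    (heven : (a 0 * a 2 * a 4) ^ 2 = 1) (hodd : (a 1 * a 3 * a 5) ^ 2 = 1) (i : Fin 6) :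
    gLift a hsq hcomm heven hodd (of i) = a i :=
  toGroup.of _

end SixGenerators

section Isomorphism

open MonoidHom

def gToHexProd : PresentedGroup gRels →* PresentedGroup hexRels × PresentedGroup hexRels :=
  gLift ![inl _ _ (of 0), inr _ _ (of 0), inl _ _ (of 1), inr _ _ (of 1), inl _ _ (of 2),
      inr _ _ (of 2)]
    (fun i => by fin_cases i <;> simp [hex_of_sq])
    (fun i j hij => by
      fin_cases i <;> fin_cases j <;>
        first
        | exact absurd rfl hij
        | exact commute_inl_inr _ _
        | exact (commute_inl_inr _ _).symm)
    (by simp [hex_of_mul_of_mul_of_sq])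
    (by simp [hex_of_mul_of_mul_of_sq])

def hexToGLeft : PresentedGroup hexRels →* PresentedGroup gRels :=
  hexLift (of 0) (of 2) (of 4) (g_of_sq 0) (g_of_sq 2) (g_of_sq 4) g_of_mul_of_mul_of_sq_even

def hexToGRight : PresentedGroup hexRels →* PresentedGroup gRels :=
  hexLift (of 1) (of 3) (of 5) (g_of_sq 1) (g_of_sq 3) (g_of_sq 5) g_of_mul_of_mul_of_sq_odd

theorem commute_hexToGLeft_hexToGRight (x y : PresentedGroup hexRels) :
    Commute (hexToGLeft x) (hexToGRight y) :=
  commute_of_forall_commute_of (fun i j => by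
    fin_cases i <;> fin_cases j <;> exact g_commute_of (by decide)) x y

def hexProdToG : PresentedGroup hexRels × PresentedGroup hexRels →* PresentedGroup gRels :=
  hexToGLeft.noncommCoprod hexToGRight commute_hexToGLeft_hexToGRight

theorem hexProdToG_comp_gToHexProd : hexProdToG.comp gToHexProd = .id _ := by
  refine PresentedGroup.ext fun i => ?_
  fin_cases i <;> simp [hexProdToG, gToHexProd, hexToGLeft, hexToGRight]

theorem gToHexProd_comp_hexToGLeft : gToHexProd.comp hexToGLeft = inl _ _ := by
  refine PresentedGroup.ext fun i => ?_
  fin_cases i <;> simp [gToHexProd, hexToGLeft]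

theorem gToHexProd_comp_hexToGRight : gToHexProd.comp hexToGRight = inr _ _ := by
  refine PresentedGroup.ext fun i => ?_
  fin_cases i <;> simp [gToHexProd, hexToGRight]

theorem gToHexProd_comp_hexProdToG : gToHexProd.comp hexProdToG = .id _ := by
  refine MonoidHom.ext fun ⟨x, y⟩ => ?_
  calc gToHexProd (hexProdToG (x, y))
      = gToHexProd.comp hexToGLeft x * gToHexProd.comp hexToGRight y := by simp [hexProdToG]
    _ = (x, y) := by simp [gToHexProd_comp_hexToGLeft, gToHexProd_comp_hexToGRight]

end Isomorphism

/-- The group `G` presented by the relations above is isomorphic to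
`H × H`, where `H = ⟨a, b, c ∣ a² = b² = c² = (abc)² = 1⟩`. -/
theorem stmt_7 :
    Nonempty (PresentedGroup gRels ≃* (PresentedGroup hexRels × PresentedGroup hexRels)) :=
  ⟨gToHexProd.toMulEquiv hexProdToG hexProdToG_comp_gToHexProd gToHexProd_comp_hexProdToG⟩
end

section
/- Let G be a group with a finite generating set A closed under inverses, and suppose G contains a subgroup T isomorphic to ℤⁿ with n ≥ 2 of finite index. Then the Cayley graph Cayley(G, A) has exactly one end: for every finite set K of vertices there is a finite set K′ ⊇ K whose complement induces a connected subgraph with exactly one infinite component. -/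
/-!
Let `φ : ℤⁿ → G` be the embedding of the finite-index subgroup and `D` a finite set with
`G = φ(ℤⁿ) D`. Every `u` in a fixed finite set `U` is a word in the generators, so for all `g`
outside some finite set the path spelling `u` leads from `g` to `g u` while avoiding a given
finite `K`. Take `U` to be `D` together with the images of the king moves of `ℤⁿ`. Lattice points
outside a large box `[-M, M]ⁿ` are mapped outside that finite set, and for `n ≥ 2` they are
connected by king moves that stay outside the box. Hence all of `φ(ℤⁿ \ [-M, M]ⁿ) D`, which is `G`
minus a finite set, lies in a single component of the complement of `K`; let `K'` be everything
outside that component.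
-/

open Function Set

namespace SimpleGraph

variable {V V' : Type*} {H : SimpleGraph V} {W : Set V} {x y z : V}

def ReachableIn (H : SimpleGraph V) (W : Set V) (x y : V) : Prop :=
  ∃ p : H.Walk x y, ∀ v ∈ p.support, v ∈ W

lemma ReachableIn.refl (hx : x ∈ W) : H.ReachableIn W x x :=
  ⟨.nil, by simpa⟩

lemma Adj.reachableIn (h : H.Adj x y) (hx : x ∈ W) (hy : y ∈ W) : H.ReachableIn W x y :=
  ⟨h.toWalk, by simp [hx, hy]⟩

lemma ReachableIn.trans (hxy : H.ReachableIn W x y) (hyz : H.ReachableIn W y z) :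
    H.ReachableIn W x z := by
  obtain ⟨p, hp⟩ := hxy
  obtain ⟨q, hq⟩ := hyz
  exact ⟨p.append q, fun v hv => ((Walk.mem_support_append_iff p q).1 hv).elim (hp v) (hq v)⟩

lemma ReachableIn.mem_left (h : H.ReachableIn W x y) : x ∈ W := by
  obtain ⟨p, hp⟩ := h
  exact hp x p.start_mem_support

lemma ReachableIn.mem_right (h : H.ReachableIn W x y) : y ∈ W := by
  obtain ⟨p, hp⟩ := h
  exact hp y p.end_mem_support

lemma ReachableIn.map {H' : SimpleGraph V'} {W' : Set V'} (f : V → V') (hfW : MapsTo f W W')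
    (hf : ∀ a ∈ W, ∀ b ∈ W, H.Adj a b → H'.ReachableIn W' (f a) (f b))
    (h : H.ReachableIn W x y) : H'.ReachableIn W' (f x) (f y) := by
  obtain ⟨p, hp⟩ := h
  induction p with
  | nil => exact .refl (hfW (hp _ (by simp)))
  | cons hab p ih =>
    exact (hf _ (hp _ (by simp)) _ (hp _ (by simp)) hab).trans
      (ih fun v hv => hp v (by simp [hv]))

lemma connected_induce_setOf_reachableIn (hx : x ∈ W) :
    (H.induce {y | H.ReachableIn W x y}).Connected := by
  classical
  refine H.induce_connected_of_patches x (.refl hx) fun {y} ⟨p, hp⟩ => ?_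
  refine ⟨{v | v ∈ p.support}, fun v hv => ⟨p.takeUntil v hv, fun w hw =>
    hp w (p.support_takeUntil_subset_support hv hw)⟩, p.start_mem_support, p.end_mem_support,
    p.connected_induce_support.preconnected _ _⟩

theorem exists_finset_superset_connected_induce_compl (K : Finset V) {B : Set V} (hB : B.Finite)
    (hx : x ∉ K) (hreach : ∀ y ∉ B, H.ReachableIn (↑K)ᶜ x y) :
    ∃ K' : Finset V, K ⊆ K' ∧ (H.induce (↑K' : Set V)ᶜ).Connected := by
  set C := {y | H.ReachableIn (↑K)ᶜ x y}
  have hfin : ((B ∪ ↑K) \ C).Finite := (hB.union K.finite_toSet).sdiff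
  refine ⟨hfin.toFinset, fun k hk => ?_, ?_⟩
  · have hkC : k ∉ C := fun h => h.mem_right hk
    simpa [hk] using hkC
  · have hC : ((hfin.toFinset : Set V))ᶜ = C := by
      ext y
      have := hreach y
      simp only [Finite.coe_toFinset, mem_compl_iff, mem_sdiff, mem_union, not_and, not_not]
      tauto
    rw [hC]
    exact connected_induce_setOf_reachableIn hx

end SimpleGraph

open SimpleGraph

section Cayley

variable {G : Type*} [Group G] {A : Set G} {W : Set G}

def cayleyGraph (A : Set G) : SimpleGraph G :=
  SimpleGraph.fromRel fun x y => ∃ a ∈ A, y = x * a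

lemma cayleyGraph_reachableIn_mul {x a : G} (ha : a ∈ A ∨ a⁻¹ ∈ A) (hx : x ∈ W)
    (hxa : x * a ∈ W) : (cayleyGraph A).ReachableIn W x (x * a) := by
  by_cases h1 : a = 1
  · subst h1
    simpa using ReachableIn.refl hx
  · refine Adj.reachableIn ?_ hx hxa
    rw [cayleyGraph, fromRel_adj]
    refine ⟨by simpa using h1, ha.imp (fun ha => ⟨a, ha, rfl⟩) fun ha => ⟨a⁻¹, ha, by simp⟩⟩

lemma exists_finite_cayleyGraph_reachableIn_mul (hA : Subgroup.closure A = ⊤) {F : Set G}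
    (hF : F.Finite) (u : G) :
    ∃ F' : Set G, F'.Finite ∧ F ⊆ F' ∧ ∀ g ∉ F', (cayleyGraph A).ReachableIn Fᶜ g (g * u) := by
  let P (u : G) : Prop :=
    ∃ F' : Set G, F'.Finite ∧ F ⊆ F' ∧ ∀ g ∉ F', (cayleyGraph A).ReachableIn Fᶜ g (g * u)
  have step (x a : G) (ha : a ∈ A ∨ a⁻¹ ∈ A) : P x → P (x * a) := by
    rintro ⟨F', hF', hFF', hreach⟩
    refine ⟨F' ∪ (· * (x * a)) ⁻¹' F, hF'.union (hF.preimage (mul_left_injective _).injOn),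
      subset_union_of_subset_left hFF' _, fun g hg => ?_⟩
    rw [mem_union, not_or] at hg
    have hgx := hreach g hg.1
    have hgxa : g * x * a ∈ Fᶜ := by simpa [mul_assoc] using hg.2
    simpa [mul_assoc] using hgx.trans (cayleyGraph_reachableIn_mul ha hgx.mem_right hgxa)
  show P u
  have hu : u ∈ Subgroup.closure A := hA ▸ Subgroup.mem_top u
  induction hu using Subgroup.closure_induction_right with
  | one => exact ⟨F, hF, subset_rfl, fun g hg => by simpa using ReachableIn.refl hg⟩
  | mul_right x _ a ha ih => exact step x a (Or.inl ha) ih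
  | mul_inv_cancel x _ a ha ih => exact step x a⁻¹ (Or.inr (by simpa using ha)) ih

lemma exists_finite_cayleyGraph_reachableIn_mul_of_finite (hA : Subgroup.closure A = ⊤)
    {F U : Set G} (hF : F.Finite) (hU : U.Finite) :
    ∃ F' : Set G, F'.Finite ∧ F ⊆ F' ∧
      ∀ g ∉ F', ∀ u ∈ U, (cayleyGraph A).ReachableIn Fᶜ g (g * u) := by
  choose F' hF' hFF' hreach using exists_finite_cayleyGraph_reachableIn_mul hA hF
  refine ⟨F ∪ ⋃ u ∈ U, F' u, hF.union (hU.biUnion fun u _ => hF' u), subset_union_left,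
    fun g hg u hu => hreach u g fun h => hg (Or.inr (mem_biUnion hu h))⟩

end Cayley

lemma Subgroup.exists_finite_forall_exists_mul_eq {G : Type*} [Group G] (T : Subgroup G)
    [T.FiniteIndex] : ∃ D : Set G, D.Finite ∧ ∀ g : G, ∃ t : T, ∃ d ∈ D, g = t * d := by
  refine ⟨range fun q : G ⧸ T => q.out⁻¹, finite_range _, fun g => ?_⟩
  obtain ⟨t, ht⟩ := QuotientGroup.mk_out_eq_mul T g⁻¹
  exact ⟨t, _, mem_range_self (QuotientGroup.mk g⁻¹ : G ⧸ T), by rw [ht]; group⟩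

section Lattice

variable {n : ℕ} {M : ℤ}

def kingGraph (n : ℕ) : SimpleGraph (Fin n → ℤ) where
  Adj p q := p ≠ q ∧ ∀ i, |q i - p i| ≤ 1
  symm := ⟨fun _ _ h => ⟨h.1.symm, fun i => abs_sub_comm (_ : ℤ) _ ▸ h.2 i⟩⟩
  loopless := ⟨fun _ h => h.1 rfl⟩

lemma kingGraph_adj {p q : Fin n → ℤ} :
    (kingGraph n).Adj p q ↔ p ≠ q ∧ ∀ i, |q i - p i| ≤ 1 :=
  Iff.rfl

def farSet (n : ℕ) (M : ℤ) : Set (Fin n → ℤ) := {k | ∃ i, M ≤ |k i|}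

lemma finite_compl_farSet : (farSet n M)ᶜ.Finite := by
  refine (Set.Finite.pi (t := fun _ : Fin n => Icc (-M) M) fun _ => finite_Icc _ _).subset ?_
  intro k hk i _
  simp only [farSet, mem_compl_iff, mem_ofPred_eq, not_exists, not_le] at hk
  exact abs_le.1 (hk i).le

lemma exists_farSet_subset_compl {s : Set (Fin n → ℤ)} (hs : s.Finite) :
    ∃ M, farSet n M ⊆ sᶜ := by
  obtain ⟨C, hC⟩ := (hs.image fun k => ∑ i, |k i|).bddAbove
  refine ⟨C + 1, fun k ⟨i, hi⟩ hk => ?_⟩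
  have := Finset.single_le_sum (f := fun i => |k i|) (fun i _ => abs_nonneg (k i))
    (Finset.mem_univ i)
  linarith [hC (mem_image_of_mem _ hk)]

lemma Int.natAbs_sub_sign_le {d : ℤ} {N : ℕ} (h : d.natAbs ≤ N + 1) :
    (d - d.sign).natAbs ≤ N := by
  rcases lt_trichotomy d 0 with hd | rfl | hd
  · rw [Int.sign_eq_neg_one_of_neg hd]
    omega
  · simp
  · rw [Int.sign_eq_one_of_pos hd]
    omega

-- Step every coordinate one unit towards `q`; as `Int.sign 0 = 0`, coordinate `i` never moves.
lemma kingGraph_reachableIn_farSet_of_apply_eq {p q : Fin n → ℤ} (i : Fin n) (hpq : p i = q i)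
    (hp : M ≤ |p i|) : (kingGraph n).ReachableIn (farSet n M) p q := by
  obtain ⟨N, hN⟩ := Finite.exists_le fun l => (q l - p l).natAbs
  induction N generalizing p with
  | zero =>
    obtain rfl : p = q := funext fun l => by have := hN l; omega
    exact .refl (⟨i, hp⟩ : p ∈ farSet n M)
  | succ N ih =>
    by_cases hpq' : p = q
    · exact hpq' ▸ .refl (⟨i, hp⟩ : p ∈ farSet n M)
    set p' : Fin n → ℤ := fun l => p l + (q l - p l).sign
    have hp'i : p' i = p i := by simp [p', hpq]
    have hadj : (kingGraph n).Adj p p' := by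
      refine kingGraph_adj.2 ⟨fun h => hpq' (funext fun l => ?_), fun l => ?_⟩
      · have := congrFun h l
        simp only [p', left_eq_add, Int.sign_eq_zero_iff_zero, sub_eq_zero] at this
        exact this.symm
      · simp only [p', add_sub_cancel_left]
        rcases Int.sign_trichotomy (q l - p l) with h | h | h <;> simp [h]
    have hp' : (kingGraph n).ReachableIn (farSet n M) p' q :=
      ih (hp'i.trans hpq) (hp'i ▸ hp) fun l => by
        simpa [p', sub_add_eq_sub_sub] using Int.natAbs_sub_sign_le (hN l)
    exact (hadj.reachableIn (⟨i, hp⟩ : p ∈ farSet n M) hp'.mem_left).trans hp'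

lemma kingGraph_reachableIn_farSet_const (hn : 2 ≤ n) {p : Fin n → ℤ} (hp : p ∈ farSet n M) :
    (kingGraph n).ReachableIn (farSet n M) (fun _ => M) p := by
  obtain ⟨i, hi⟩ := hp
  have : Nontrivial (Fin n) := Fin.nontrivial_iff_two_le.2 hn
  obtain ⟨j, hji⟩ := exists_ne i
  refine (kingGraph_reachableIn_farSet_of_apply_eq j (q := update p j M) ?_
    (le_abs_self M)).trans (kingGraph_reachableIn_farSet_of_apply_eq i ?_ ?_)
  · simp
  · simp [hji.symm]
  · simpa [hji.symm] using hi

end Lattice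

theorem cayleyGraph_exists_finset_superset_connected_induce_compl {G : Type*} [Group G]
    {A : Set G} (hA : Subgroup.closure A = ⊤) {n : ℕ} (hn : 2 ≤ n) (φ : (Fin n → ℤ) → G)
    (hφ_add : ∀ p q, φ (p + q) = φ p * φ q) (hφ : Injective φ) {D : Set G} (hD : D.Finite)
    (hcover : ∀ g, ∃ k, ∃ d ∈ D, g = φ k * d) (K : Finset G) :
    ∃ K' : Finset G, K ⊆ K' ∧ ((cayleyGraph A).induce (↑K')ᶜ).Connected := by
  obtain ⟨F', hF', hKF', hreach⟩ := exists_finite_cayleyGraph_reachableIn_mul_of_finite hA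
    K.finite_toSet (((Set.Finite.pi fun _ => finite_Icc (-1 : ℤ) 1).image φ).union hD)
  obtain ⟨M, hM⟩ := exists_farSet_subset_compl (hF'.preimage hφ.injOn)
  have hMK : MapsTo φ (farSet n M) (↑K)ᶜ := fun k hk => compl_subset_compl.2 hKF' (hM hk)
  have hbase (k) (hk : k ∈ farSet n M) :
      (cayleyGraph A).ReachableIn (↑K)ᶜ (φ fun _ => M) (φ k) := by
    refine (kingGraph_reachableIn_farSet_const hn hk).map φ hMK fun p hp q _ hpq => ?_
    have hstep : q - p ∈ Set.pi univ fun _ => Icc (-1) 1 :=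
      fun i _ => abs_le.1 ((kingGraph_adj.1 hpq).2 i)
    simpa [← hφ_add] using hreach _ (hM hp) _ (Or.inl (mem_image_of_mem φ hstep))
  refine exists_finset_superset_connected_induce_compl K
    (((finite_compl_farSet (M := M)).image φ).mul hD) (x := φ fun _ => M)
    (hMK ⟨⟨0, by omega⟩, le_abs_self M⟩) fun g hg => ?_
  obtain ⟨k, d, hd, rfl⟩ := hcover g
  have hk : k ∈ farSet n M := by_contra fun hk => hg (mul_mem_mul (mem_image_of_mem φ hk) hd)
  exact (hbase k hk).trans (hreach _ (hM hk) d (Or.inr hd))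

theorem stmt_17_general {G : Type*} [Group G] (A : Finset G)
    (hgen : Subgroup.closure (↑A : Set G) = ⊤)
    (n : ℕ) (hn : 2 ≤ n) (T : Subgroup G) (hT : T.FiniteIndex)
    (eT : T ≃* Multiplicative (Fin n → ℤ))
    (K : Finset G) :
    ∃ K' : Finset G, K ⊆ K' ∧
      ((SimpleGraph.fromRel (fun x y => ∃ a ∈ A, y = x * a)).induce
        ((↑K' : Set G)ᶜ)).Connected := by
  obtain ⟨D, hD, hcover⟩ := T.exists_finite_forall_exists_mul_eq
  refine cayleyGraph_exists_finset_superset_connected_induce_compl hgen hn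
    (fun k => (eT.symm (.ofAdd k) : G)) (fun p q => by simp [ofAdd_add])
    ((Subtype.val_injective.comp eT.symm.injective).comp Multiplicative.ofAdd.injective) hD
    (fun g => ?_) K
  obtain ⟨t, d, hd, rfl⟩ := hcover g
  exact ⟨(eT t).toAdd, d, hd, by simp⟩

/-- Let `G` be generated by a finite set `A` closed under inverses
and suppose `G` has a finite-index subgroup `T ≅ ℤⁿ` for some `n ≥ 2`. Then the
Cayley graph of `G` with respect to `A` has exactly one end: every finite set
`K` of vertices is contained in a finite set `K′` whose complement induces a
connected subgraph (in particular exactly one infinite component). -/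
theorem stmt_17 {G : Type*} [Group G] (A : Finset G)
    (hinv : ∀ a ∈ A, a⁻¹ ∈ A) (hgen : Subgroup.closure (↑A : Set G) = ⊤)
    (n : ℕ) (hn : 2 ≤ n) (T : Subgroup G) (hT : T.FiniteIndex)
    (eT : T ≃* Multiplicative (Fin n → ℤ))
    (K : Finset G) :
    ∃ K' : Finset G, K ⊆ K' ∧
      ((SimpleGraph.fromRel (fun x y => ∃ a ∈ A, y = x * a)).induce
        ((↑K' : Set G)ᶜ)).Connected :=
  stmt_17_general A hgen n hn T hT eT K
end
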